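/- arXiv:2310.01162 — 2 statements merged into one kernel-verified Lean document; each statement's English description precedes it below -/
import Mathlib

section
/- Let K ≥ 2 be a natural number, let u, v ∈ [0,1]^K (every coordinate in [0,1]), and suppose the dot product satisfies ⟨u,v⟩ = Σ_{q=1}^K u_q v_q ≤ C for some constant C ≥ 0. Then for every index d ∈ {1,…,K}, |μ_d(u,v) − (u_d v_d)/K| ≤ (C + 1)/(K(K−1)); in particular, for fixed C the error in approximating μ_d(u,v) by (u_d v_d)/K is of order 1/K². -/
open Finset

/-- The average edge scoring `Δ_S(u,v) = (1/|S|) Σ_{q∈S} u_q v_q`. -/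
noncomputable def avgScore {K : ℕ} (u v : Fin K → ℝ) (S : Finset (Fin K)) : ℝ :=
  (∑ q ∈ S, u q * v q) / S.card

/-- The marginal utility `μ_d(u,v) = Δ_{{1,…,K}}(u,v) − Δ_{{1,…,K}∖{d}}(u,v)`. -/
noncomputable def mu {K : ℕ} (u v : Fin K → ℝ) (d : Fin K) : ℝ :=
  avgScore u v Finset.univ - avgScore u v (Finset.univ.erase d)

/-!
Writing `s = u_d v_d` and `T = Σ_{q ≠ d} u_q v_q`, one has `K μ_d = s - T/(K-1)`, so
`μ_d - s/K = -T/(K(K-1))`. Nonnegativity of the coordinates gives `0 ≤ T ≤ ⟨u,v⟩ ≤ C`.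
-/

theorem card_mul_avgScore {K : ℕ} (u v : Fin K → ℝ) (S : Finset (Fin K)) :
    (#S : ℝ) * avgScore u v S = ∑ q ∈ S, u q * v q := by
  rcases S.eq_empty_or_nonempty with rfl | hS
  · simp
  · exact mul_div_cancel₀ _ (by exact_mod_cast hS.card_pos.ne')

theorem cast_card_univ_erase {K : ℕ} (d : Fin K) : (#(univ.erase d) : ℝ) = K - 1 := by
  rw [card_erase_of_mem (mem_univ d), card_univ, Fintype.card_fin, Nat.cast_sub d.pos,
    Nat.cast_one]

theorem card_mul_mu {K : ℕ} (u v : Fin K → ℝ) (d : Fin K) :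
    (K : ℝ) * mu u v d = u d * v d - avgScore u v (univ.erase d) := by
  have hUniv := card_mul_avgScore u v univ
  have hErase := card_mul_avgScore u v (univ.erase d)
  rw [card_univ, Fintype.card_fin, ← add_sum_erase univ _ (mem_univ d)] at hUniv
  rw [cast_card_univ_erase] at hErase
  unfold mu
  linear_combination hUniv - hErase

theorem mu_sub_div_card {K : ℕ} (u v : Fin K → ℝ) (d : Fin K) :
    mu u v d - u d * v d / K = -(avgScore u v (univ.erase d) / K) := by
  have hK : (K : ℝ) ≠ 0 := by exact_mod_cast d.pos.ne'
  field_simp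
  linear_combination card_mul_mu u v d

theorem abs_mu_sub_single_product_le_general {K : ℕ} (u v : Fin K → ℝ)
    (hu : ∀ q, u q ∈ Set.Icc (0 : ℝ) 1) (hv : ∀ q, v q ∈ Set.Icc (0 : ℝ) 1)
    (C : ℝ) (hsum : ∑ q, u q * v q ≤ C) (d : Fin K) :
    |mu u v d - (u d * v d) / (K : ℝ)| ≤ (C + 1) / ((K : ℝ) * ((K : ℝ) - 1)) := by
  have hprod : ∀ q, 0 ≤ u q * v q := fun q => mul_nonneg (hu q).1 (hv q).1
  have hT : 0 ≤ ∑ q ∈ univ.erase d, u q * v q := sum_nonneg fun q _ => hprod q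
  have hTC : ∑ q ∈ univ.erase d, u q * v q ≤ C := by
    linarith [add_sum_erase univ (fun q => u q * v q) (mem_univ d), hprod d]
  have hden : 0 ≤ (K : ℝ) * (K - 1) :=
    mul_nonneg (Nat.cast_nonneg K) (sub_nonneg.2 (Nat.one_le_cast.2 d.pos))
  rw [mu_sub_div_card, abs_neg, avgScore, cast_card_univ_erase, div_div, mul_comm _ (K : ℝ),
    abs_of_nonneg (div_nonneg hT hden)]
  exact div_le_div_of_nonneg_right (by linarith) hden

/-- For embeddings in the unit hypercube with bounded inner product
`⟨u,v⟩ ≤ C`, the error of approximating `μ_d(u,v)` by `(u_d v_d)/K` is at most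
`(C+1)/(K(K−1))`, i.e. of order `1/K²` for fixed `C`. -/
theorem abs_mu_sub_single_product_le {K : ℕ} (hK : 2 ≤ K) (u v : Fin K → ℝ)
    (hu : ∀ q, u q ∈ Set.Icc (0 : ℝ) 1) (hv : ∀ q, v q ∈ Set.Icc (0 : ℝ) 1)
    (C : ℝ) (hC : 0 ≤ C) (hsum : ∑ q, u q * v q ≤ C) (d : Fin K) :
    |mu u v d - (u d * v d) / (K : ℝ)| ≤ (C + 1) / ((K : ℝ) * ((K : ℝ) - 1)) :=
  abs_mu_sub_single_product_le_general u v hu hv C hsum d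
end

section
/- Let K ≥ 2 be a natural number and u, v ∈ ℝ^K. If the coordinate-wise products u_q v_q (q = 1,…,K) are not all equal, then there exists a dimension d with μ_d(u,v) > 0 and there exists a dimension d' with μ_{d'}(u,v) < 0. In particular, every edge whose embedding products are non-constant across dimensions belongs to at least one explanation subgraph. -/
open Finset

/-!
With `w q = u q * v q`, removing dimension `d` changes the mean of `w` by
`μ_d = (w d - mean w) / (K - 1)`, so the sign of `μ_d` is the sign of `w d - mean w`.
A non-constant family has entries strictly above and strictly below its mean.
-/

open scoped BigOperators

namespace Finset

variable {ι 𝕜 : Type*} [Field 𝕜]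

theorem expect_sub_expect_erase [CharZero 𝕜] [DecidableEq ι] {s : Finset ι} {a : ι}
    (ha : a ∈ s) (hs : 2 ≤ #s) (f : ι → 𝕜) :
    𝔼 i ∈ s, f i - 𝔼 i ∈ s.erase a, f i = (f a - 𝔼 i ∈ s, f i) / (#s - 1) := by
  have hs₀ : (#s : 𝕜) ≠ 0 := by norm_cast; omega
  have hs₁ : (#s : 𝕜) - 1 ≠ 0 := by
    rw [sub_ne_zero]; norm_cast; omega
  rw [expect_eq_sum_div_card, expect_eq_sum_div_card, sum_erase_eq_sub ha, card_erase_of_mem ha,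
    Nat.cast_sub (by omega), Nat.cast_one]
  field_simp
  ring

variable [LinearOrder 𝕜] [IsStrictOrderedRing 𝕜]

theorem exists_expect_lt_of_ne {s : Finset ι} {f : ι → 𝕜} {a b : ι}
    (ha : a ∈ s) (hb : b ∈ s) (hab : f a ≠ f b) : ∃ x ∈ s, 𝔼 i ∈ s, f i < f x := by
  by_contra! hle
  have hconst : ∀ x ∈ s, f x = 𝔼 i ∈ s, f i := fun x hx =>
    le_antisymm (hle x hx) <| not_lt.1 fun hlt => (expect_lt hle ⟨x, hx, hlt⟩).false
  exact hab ((hconst a ha).trans (hconst b hb).symm)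

theorem exists_lt_expect_of_ne {s : Finset ι} {f : ι → 𝕜} {a b : ι}
    (ha : a ∈ s) (hb : b ∈ s) (hab : f a ≠ f b) : ∃ x ∈ s, f x < 𝔼 i ∈ s, f i := by
  obtain ⟨x, hx, hlt⟩ :=
    exists_expect_lt_of_ne (f := fun i => -f i) ha hb (neg_injective.ne hab)
  exact ⟨x, hx, by simpa only [expect_neg_distrib, neg_lt_neg_iff] using hlt⟩

end Finset

theorem avgScore_eq_expect {K : ℕ} (u v : Fin K → ℝ) (S : Finset (Fin K)) :
    avgScore u v S = 𝔼 q ∈ S, u q * v q :=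
  (expect_eq_sum_div_card S _).symm

theorem mu_eq_div {K : ℕ} (hK : 2 ≤ K) (u v : Fin K → ℝ) (d : Fin K) :
    mu u v d = (u d * v d - avgScore u v univ) / (K - 1) := by
  rw [mu, avgScore_eq_expect, avgScore_eq_expect,
    expect_sub_expect_erase (mem_univ d) (by simpa using hK), card_univ, Fintype.card_fin]

/-- If the coordinate-wise products `u_q v_q` are not all equal, then some
dimension has strictly positive marginal utility and some dimension has
strictly negative marginal utility. -/
theorem exists_mu_pos_and_neg {K : ℕ} (hK : 2 ≤ K) (u v : Fin K → ℝ)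
    (h : ¬ ∀ q q' : Fin K, u q * v q = u q' * v q') :
    (∃ d : Fin K, mu u v d > 0) ∧ (∃ d' : Fin K, mu u v d' < 0) := by
  push Not at h
  obtain ⟨a, b, hab⟩ := h
  have hK₁ : (0 : ℝ) < K - 1 := by
    rw [sub_pos]; exact_mod_cast hK
  obtain ⟨d, -, hd⟩ :=
    exists_expect_lt_of_ne (f := fun q => u q * v q) (mem_univ a) (mem_univ b) hab
  obtain ⟨d', -, hd'⟩ :=
    exists_lt_expect_of_ne (f := fun q => u q * v q) (mem_univ a) (mem_univ b) hab
  rw [← avgScore_eq_expect] at hd hd'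
  refine ⟨⟨d, ?_⟩, ⟨d', ?_⟩⟩
  · rw [mu_eq_div hK]; exact div_pos (sub_pos.2 hd) hK₁
  · rw [mu_eq_div hK]; exact div_neg_of_neg_of_pos (sub_neg.2 hd') hK₁
end
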